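/- Let A' = (f'₁, f'₂, f'₄, f'₆). Then det(f'₁ f'₂ f'₄ f'₆) ≡ 1 (mod 3); the set 𝒢_{A'} is well defined, the additive subsemigroup S_{A'} of ℤ⁴ generated by 𝒢_{A'} is pointed (S_{A'} ∩ (−S_{A'}) = {0}), and the convex cone in ℝ⁴ generated by 𝒢_{A'} equals the convex cone generated by the five vectors (0,0,0,1), (0,1,0,0), (0,1,3,0), (1,0,0,−1), (1,0,3,0). -/

import Mathlib

/-- The seven lattice points `f'₁, …, f'₇` (0-indexed as `f' 0, …, f' 6`). -/
def f' : Fin 7 → (Fin 4 → ℤ) :=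
  ![![0,0,0,1], ![0,1,0,0], ![0,2,3,0], ![1,0,0,-1], ![1,1,3,0],
    ![0,1,1,0], ![1,1,2,0]]

/-- The Hilbert basis `ℋ' = {f'₁, …, f'₇}`. -/
def Hset' : Set (Fin 4 → ℤ) := Set.range f'

/-- The ordered tuple `A' = (f'₁, f'₂, f'₄, f'₆)`. -/
def A' : Fin 4 → (Fin 4 → ℤ) := ![f' 0, f' 1, f' 3, f' 5]

/-- The 4×4 integer matrix whose columns are the members of a family of four vectors. -/
def colMat (c : Fin 4 → (Fin 4 → ℤ)) : Matrix (Fin 4) (Fin 4) ℤ :=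
  Matrix.of fun i j => c j i

/-- The set `𝒢_{A'} = ℋ' ∪ {g − aⱼ : g ∈ ℋ'∖A', det of (A' with column aⱼ replaced by g) ≢ 0 mod 3}`. -/
def GA' : Set (Fin 4 → ℤ) :=
  Hset' ∪ {x | ∃ g ∈ Hset', (∀ j, g ≠ A' j) ∧
    ∃ j : Fin 4, x = g - A' j ∧ (((colMat (Function.update A' j g)).det : ZMod 3) ≠ 0)}

/-- The subsemigroup `S_{A'}` of `ℤ⁴` generated by `𝒢_{A'}`. -/
def SA' : AddSubmonoid (Fin 4 → ℤ) := AddSubmonoid.closure GA'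

/-- Coercion of an integer vector to a real vector. -/
def toR (v : Fin 4 → ℤ) : Fin 4 → ℝ := fun j => (v j : ℝ)

/-- The convex cone in `ℝ⁴` generated by a set of integer vectors. -/
def coneOf (T : Set (Fin 4 → ℤ)) : Set (Fin 4 → ℝ) :=
  {x | ∃ s : Finset (Fin 4 → ℤ), ↑s ⊆ T ∧ ∃ c : (Fin 4 → ℤ) → ℝ,
    (∀ v, 0 ≤ c v) ∧ x = ∑ v ∈ s, c v • toR v}

/-!
The linear form `2x₀ + x₁ + x₃` is positive on each of the fifteen vectors of `𝒢_{A'}`, hence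
on every nonzero element of `S_{A'}`, so `S_{A'}` is pointed.

For the cones, the five given vectors `b₁, …, b₅` lie in `𝒢_{A'}`. Conversely, they satisfy
`b₂ + b₅ = b₁ + b₃ + b₄`, so their cone is the union of the simplicial cones spanned by
`(b₂, b₁, b₃, b₄)` and `(b₁, b₃, b₄, b₅)`. By Cramer's rule a vector `v` lies in the simplicial
cone of the columns of `M` (with `det M > 0`) as soon as `adj(M) v ≥ 0`, and this is checked
by computation for each vector of `𝒢_{A'}`.
-/

open Matrix

theorem AddSubmonoid.eq_zero_of_mem_closure_of_neg_mem {M N : Type*} [AddGroup M]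
    [AddCommGroup N] [LinearOrder N] [IsOrderedAddMonoid N] {G : Set M} (φ : M →+ N)
    (hφ : ∀ v ∈ G, 0 < φ v) {x : M} (hx : x ∈ closure G) (hnx : -x ∈ closure G) : x = 0 := by
  have eq_zero_or_pos : ∀ y ∈ closure G, y = 0 ∨ 0 < φ y := fun y hy => by
    induction hy using closure_induction with
    | mem v hv => exact .inr (hφ v hv)
    | zero => exact .inl rfl
    | add y z _ _ ihy ihz =>
      rcases ihy with rfl | hy
      · rw [zero_add]; exact ihz
      rcases ihz with rfl | hz
      · rw [add_zero]; exact .inr hy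
      · exact .inr (by rw [map_add]; exact add_pos hy hz)
  rcases eq_zero_or_pos x hx with h | h
  · exact h
  rcases eq_zero_or_pos (-x) hnx with h' | h'
  · exact neg_eq_zero.1 h'
  · rw [map_neg, neg_pos] at h'
    exact (lt_asymm h h').elim

theorem PointedCone.mem_hull_range_transpose_of_adjugate_mulVec_nonneg {𝕜 n : Type*} [Field 𝕜]
    [LinearOrder 𝕜] [IsStrictOrderedRing 𝕜] [Fintype n] [DecidableEq n] {M : Matrix n n 𝕜}
    (hM : 0 < M.det) {v : n → 𝕜} (hv : 0 ≤ M.adjugate *ᵥ v) :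
    v ∈ PointedCone.hull 𝕜 (Set.range Mᵀ) := by
  have hv_eq : v = ∑ j, (M.det⁻¹ * (M.adjugate *ᵥ v) j) • Mᵀ j :=
    calc v = M *ᵥ (M.det⁻¹ • M.adjugate *ᵥ v) := by
          rw [mulVec_smul, mulVec_mulVec, mul_adjugate, smul_mulVec, one_mulVec, smul_smul,
            inv_mul_cancel₀ hM.ne', one_smul]
    _ = _ := by simp only [mulVec_eq_sum, op_smul_eq_smul, Pi.smul_apply, smul_eq_mul]
  rw [hv_eq]
  exact Submodule.sum_mem _ fun j _ => PointedCone.smul_mem _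
    (mul_nonneg (inv_nonneg.2 hM.le) (hv j)) (PointedCone.subset_hull ⟨j, rfl⟩)

theorem toR_injective : Function.Injective toR :=
  fun _ _ h => funext fun j => Int.cast_injective (congrFun h j)

theorem coneOf_eq_hull (T : Set (Fin 4 → ℤ)) : coneOf T = PointedCone.hull ℝ (toR '' T) := by
  classical
  ext x
  constructor
  · rintro ⟨s, hs, c, hc, rfl⟩
    exact Submodule.sum_mem _ fun v hv =>
      PointedCone.smul_mem _ (hc v) (PointedCone.subset_hull ⟨v, hs hv, rfl⟩)
  · intro hx
    obtain ⟨f, t, ht, -, rfl⟩ := Submodule.mem_span_iff_exists_finset_subset.1 hx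
    obtain ⟨s, hs, rfl⟩ := Finset.subset_set_image_iff.1 ht
    refine ⟨s, hs, fun v => f (toR v), fun v => (f (toR v)).2, ?_⟩
    rw [Finset.sum_image toR_injective.injOn]
    rfl

theorem toR_mem_hull_of_adjugate_mulVec_nonneg {b : Fin 4 → Fin 4 → ℤ}
    (hb : 0 < (colMat b).det) {v : Fin 4 → ℤ} (hv : 0 ≤ (colMat b).adjugate *ᵥ v) :
    toR v ∈ PointedCone.hull ℝ (toR '' Set.range b) := by
  set f := Int.castRingHom ℝ
  have hrange : Set.range (f.mapMatrix (colMat b))ᵀ = toR '' Set.range b := by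
    rw [← Set.range_comp]; rfl
  rw [← hrange]
  refine PointedCone.mem_hull_range_transpose_of_adjugate_mulVec_nonneg ?_ fun i => ?_
  · rw [← RingHom.map_det]; exact Int.cast_pos.2 hb
  · rw [← RingHom.map_adjugate]
    exact (Int.cast_nonneg (hv i)).trans_eq (RingHom.map_mulVec f (colMat b).adjugate v i)

def GA'Finset : Finset (Fin 4 → ℤ) :=
  Finset.univ.image f' ∪
    ((Finset.univ : Finset (Fin 7 × Fin 4)).filter fun p => (∀ j, f' p.1 ≠ A' j) ∧
      ((colMat (Function.update A' p.2 (f' p.1))).det : ZMod 3) ≠ 0).image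
      fun p => f' p.1 - A' p.2

theorem coe_GA'Finset : (GA'Finset : Set (Fin 4 → ℤ)) = GA' := by
  ext v
  simp only [GA'Finset, GA', Hset', Finset.coe_union, Finset.coe_image, Finset.coe_filter,
    Finset.mem_univ, true_and, Set.image, Set.mem_ofPred_eq, Prod.exists, Set.mem_union,
    Set.mem_range]
  grind

def height : (Fin 4 → ℤ) →+ ℤ :=
  AddMonoidHom.mk' (fun v => 2 * v 0 + v 1 + v 3) fun v w => by simp only [Pi.add_apply]; ring

theorem height_pos : ∀ v ∈ GA', 0 < height v := by
  rw [← coe_GA'Finset]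
  decide

def coneGens : Finset (Fin 4 → ℤ) :=
  {![0,0,0,1], ![0,1,0,0], ![0,1,3,0], ![1,0,0,-1], ![1,0,3,0]}

theorem coe_coneGens : (coneGens : Set (Fin 4 → ℤ)) =
    {![0,0,0,1], ![0,1,0,0], ![0,1,3,0], ![1,0,0,-1], ![1,0,3,0]} := by
  simp [coneGens]

def simplex₁ : Fin 4 → Fin 4 → ℤ := ![![0,1,0,0], ![0,0,0,1], ![0,1,3,0], ![1,0,0,-1]]

def simplex₂ : Fin 4 → Fin 4 → ℤ := ![![0,0,0,1], ![0,1,3,0], ![1,0,0,-1], ![1,0,3,0]]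

theorem adjugate_mulVec_nonneg_of_mem_GA'Finset : ∀ v ∈ GA'Finset,
    (∀ i, 0 ≤ ((colMat simplex₁).adjugate *ᵥ v) i) ∨
      ∀ i, 0 ≤ ((colMat simplex₂).adjugate *ᵥ v) i := by
  decide

theorem toR_mem_hull_coneGens {v : Fin 4 → ℤ} (hv : v ∈ GA'Finset) :
    toR v ∈ PointedCone.hull ℝ (toR '' coneGens) := by
  have h₁ : Set.range simplex₁ ⊆ coneGens := Set.range_subset_iff.2 (by decide)
  have h₂ : Set.range simplex₂ ⊆ coneGens := Set.range_subset_iff.2 (by decide)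
  rcases adjugate_mulVec_nonneg_of_mem_GA'Finset v hv with h | h
  · exact Submodule.span_mono (Set.image_mono h₁)
      (toR_mem_hull_of_adjugate_mulVec_nonneg (by decide) h)
  · exact Submodule.span_mono (Set.image_mono h₂)
      (toR_mem_hull_of_adjugate_mulVec_nonneg (by decide) h)

set_option maxRecDepth 2000 in
theorem coneGens_subset_GA'Finset : coneGens ⊆ GA'Finset := by
  decide

/-- `det(f'₁ f'₂ f'₄ f'₆) ≡ 1 (mod 3)`, the semigroup `S_{A'}` generated by `𝒢_{A'}` is
pointed, and the cone generated by `𝒢_{A'}` equals the cone generated by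
`(0,0,0,1), (0,1,0,0), (0,1,3,0), (1,0,0,−1), (1,0,3,0)`. -/
theorem stmt_17 :
    ((colMat A').det : ZMod 3) = 1 ∧
    {x : Fin 4 → ℤ | x ∈ SA' ∧ -x ∈ SA'} = {0} ∧
    coneOf GA' = coneOf {![0,0,0,1], ![0,1,0,0], ![0,1,3,0], ![1,0,0,-1], ![1,0,3,0]} := by
  refine ⟨by decide, ?_, ?_⟩
  · ext x
    refine ⟨fun ⟨hx, hnx⟩ =>
      AddSubmonoid.eq_zero_of_mem_closure_of_neg_mem height height_pos hx hnx, ?_⟩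
    rintro rfl
    exact ⟨zero_mem SA', by rw [neg_zero]; exact zero_mem SA'⟩
  · rw [← coe_coneGens, coneOf_eq_hull, coneOf_eq_hull, ← coe_GA'Finset]
    refine le_antisymm (Submodule.span_le.2 ?_) (Submodule.span_mono (Set.image_mono ?_))
    · rintro _ ⟨v, hv, rfl⟩
      exact toR_mem_hull_coneGens hv
    · exact Finset.coe_subset.2 coneGens_subset_GA'Finset
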